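/- For every i ∈ {1,…,N}, it holds that I(W; U_i | Z̃_i, Z̃_{i+N}) ≤ I(W; U_i | S̃). -/

import Mathlib

open MeasureTheory ProbabilityTheory ENNReal Classical

/-- Kullback--Leibler divergence: `∫ log (dP/dQ) dP` if `P ≪ Q` (and the log-likelihood ratio
is integrable), and `+∞` otherwise. -/
noncomputable def KLdiv {Ω : Type*} [MeasurableSpace Ω] (P Q : Measure Ω) : ℝ≥0∞ :=
  if P ≪ Q ∧ Integrable (llr P Q) P then ENNReal.ofReal (∫ x, llr P Q x ∂P) else ⊤

/-- Conditional mutual information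
`I(A;B|C) = E_{c ∼ P_C}[ KL( P_{A,B|C=c} ‖ P_{A|C=c} × P_{B|C=c} ) ]`,
defined via regular conditional distributions. -/
noncomputable def condMI {Ω α β γ : Type*} [MeasurableSpace Ω]
    [MeasurableSpace α] [StandardBorelSpace α] [Nonempty α]
    [MeasurableSpace β] [StandardBorelSpace β] [Nonempty β]
    [MeasurableSpace γ]
    (μ : Measure Ω) [IsFiniteMeasure μ] (A : Ω → α) (B : Ω → β) (C : Ω → γ) : ℝ≥0∞ :=
  ∫⁻ c, KLdiv (condDistrib (fun ω => (A ω, B ω)) C μ c)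
      ((condDistrib A C μ c).prod (condDistrib B C μ c)) ∂(μ.map C)

/-- The index `i + u·N` in the super-sample: `Z_i = Z̃_{i + U_i N}`. -/
def subIdx (N : ℕ) (i : Fin N) (u : Bool) : Fin (2 * N) :=
  ⟨i.val + if u then N else 0, by have := i.isLt; cases u <;> simp <;> omega⟩

/-- The dataset `S` selected from the super-sample `S̃` by the Bernoulli variables `U`. -/
def dataset {𝒵 : Type*} (N : ℕ) (p : (Fin (2 * N) → 𝒵) × (Fin N → Bool)) : Fin N → 𝒵 :=
  fun i => p.1 (subIdx N i (p.2 i))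

lemma measurable_dataset {𝒵 : Type*} [MeasurableSpace 𝒵] {N : ℕ} :
    Measurable (dataset (𝒵 := 𝒵) N) := by
  refine measurable_pi_lambda _ fun i => ?_
  have h1 : Measurable fun q : (Fin (2 * N) → 𝒵) × Bool => q.1 (subIdx N i q.2) :=
    measurable_from_prod_countable_left fun b => measurable_pi_apply (subIdx N i b)
  have h2 : Measurable fun p : (Fin (2 * N) → 𝒵) × (Fin N → Bool) => (p.1, p.2 i) :=
    measurable_fst.prodMk ((measurable_pi_apply i).comp measurable_snd)
  exact h1.comp h2

/-- The Bernoulli(1/2) distribution on `Bool`. -/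
noncomputable def bern : Measure Bool := (PMF.bernoulli (1 / 2) (by norm_num)).toMeasure

/-!
If `B` is independent of `C`, then `I(A; B | C)` is the expected KL divergence between the
conditional laws of `(A, B)` and `A ⊗ B` given `C`; by the chain rule for KL divergence it equals
the KL divergence between the law of `(C, A, B)` and `law(C, A) ⊗ law(B)`. Replacing `C = S̃` by
`f(S̃) = (Z̃_i, Z̃_{i+N})` pushes both measures forward along `f × id` (independence of `U_i` from
`S̃` passes to `f(S̃)`), so the inequality is the data processing inequality for KL divergence.
-/

open InformationTheory

lemma KLdiv_eq_klDiv {α : Type*} [MeasurableSpace α] (P Q : Measure α) [IsProbabilityMeasure P]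
    [IsProbabilityMeasure Q] : KLdiv P Q = klDiv P Q := by
  by_cases h : P ≪ Q ∧ Integrable (llr P Q) P
  · rw [KLdiv, if_pos h, klDiv_of_ac_of_integrable h.1 h.2]
    simp
  · rw [KLdiv, if_neg h, eq_comm, klDiv_eq_top_iff]
    exact fun hPQ hint ↦ h ⟨hPQ, hint⟩

section KullbackLeibler

variable {α β : Type*} [MeasurableSpace α] [MeasurableSpace β]

lemma rnDeriv_compProd_right_ae_eq [MeasurableSpace.CountablyGenerated β] {μ : Measure α}
    [IsFiniteMeasure μ] {κ η : Kernel α β} [IsFiniteKernel κ] [IsFiniteKernel η]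
    (hκη : ∀ᵐ a ∂μ, κ a ≪ η a) :
    (μ ⊗ₘ κ).rnDeriv (μ ⊗ₘ η) =ᵐ[μ ⊗ₘ η] fun p ↦ κ.rnDeriv η p.1 p.2 := by
  have hκ : μ ⊗ₘ κ = (μ ⊗ₘ η).withDensity fun p ↦ κ.rnDeriv η p.1 p.2 := by
    rw [← Measure.compProd_withDensity (Kernel.measurable_rnDeriv κ η)]
    refine Measure.compProd_congr ?_
    filter_upwards [hκη] with a ha using (Kernel.withDensity_rnDeriv_eq ha).symm
  rw [hκ]
  exact Measure.rnDeriv_withDensity _ (Kernel.measurable_rnDeriv κ η)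

theorem lintegral_klDiv_eq_klDiv_compProd [MeasurableSpace.CountablyGenerated β]
    (μ : Measure α) [IsFiniteMeasure μ] (κ η : Kernel α β) [IsMarkovKernel κ] [IsMarkovKernel η] :
    ∫⁻ a, klDiv (κ a) (η a) ∂μ = klDiv (μ ⊗ₘ κ) (μ ⊗ₘ η) := by
  by_cases hκη : ∀ᵐ a ∂μ, κ a ≪ η a
  · rw [klDiv_eq_lintegral_klFun_of_ac (Measure.absolutelyContinuous_compProd_right_iff.2 hκη)]
    calc ∫⁻ a, klDiv (κ a) (η a) ∂μ
        = ∫⁻ a, ∫⁻ b, ENNReal.ofReal (klFun (κ.rnDeriv η a b).toReal) ∂η a ∂μ := by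
          refine lintegral_congr_ae ?_
          filter_upwards [hκη] with a ha
          rw [klDiv_eq_lintegral_klFun_of_ac ha]
          refine lintegral_congr_ae ?_
          filter_upwards [Kernel.rnDeriv_eq_rnDeriv_measure (κ := κ) (η := η) (a := a)] with b hb
          rw [hb]
      _ = ∫⁻ p, ENNReal.ofReal (klFun (κ.rnDeriv η p.1 p.2).toReal) ∂(μ ⊗ₘ η) :=
          (Measure.lintegral_compProd
            (measurable_klFun.comp (Kernel.measurable_rnDeriv κ η).ennreal_toReal).ennreal_ofReal).symm
      _ = ∫⁻ p, ENNReal.ofReal (klFun ((μ ⊗ₘ κ).rnDeriv (μ ⊗ₘ η) p).toReal) ∂(μ ⊗ₘ η) := by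
          refine lintegral_congr_ae ?_
          filter_upwards [rnDeriv_compProd_right_ae_eq hκη] with p hp
          rw [hp]
  · have hbad : μ {a | κ a ≪ η a}ᶜ ≠ 0 := hκη
    rw [klDiv_of_not_ac (mt Measure.absolutelyContinuous_compProd_right_iff.1 hκη), eq_top_iff]
    calc ∞ = ∫⁻ _ in {a | κ a ≪ η a}ᶜ, ∞ ∂μ := by simp [ENNReal.top_mul hbad]
      _ = ∫⁻ a in {a | κ a ≪ η a}ᶜ, klDiv (κ a) (η a) ∂μ :=
          setLIntegral_congr_fun (Kernel.measurableSet_absolutelyContinuous κ η).compl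
            fun a ha ↦ (klDiv_of_not_ac ha).symm
      _ ≤ ∫⁻ a, klDiv (κ a) (η a) ∂μ := setLIntegral_le_lintegral _ _

end KullbackLeibler

lemma compProd_prod_const {α β γ : Type*} [MeasurableSpace α] [MeasurableSpace β]
    [MeasurableSpace γ] (μ : Measure α) [SFinite μ] (κ : Kernel α β) [IsSFiniteKernel κ]
    (ν : Measure γ) [SFinite ν] :
    μ ⊗ₘ (κ ×ₖ Kernel.const α ν) = ((μ ⊗ₘ κ).prod ν).map MeasurableEquiv.prodAssoc := by
  have : κ ×ₖ Kernel.const α ν = κ ⊗ₖ Kernel.const (α × β) ν := by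
    ext a s hs
    rw [Kernel.prod_apply, Kernel.compProd_apply hs, Measure.prod_apply hs]
    rfl
  rw [this, ← Measure.compProd_const, Measure.compProd_assoc']

lemma map_prodMap_id_map_prodMk {Ω S T E : Type*} [MeasurableSpace Ω] [MeasurableSpace S]
    [MeasurableSpace T] [MeasurableSpace E] {μ : Measure Ω} {X : Ω → S} {Y : Ω → E} {f : S → T}
    (hf : Measurable f) (hX : Measurable X) (hY : Measurable Y) :
    (μ.map fun ω ↦ (X ω, Y ω)).map (Prod.map f id) = μ.map fun ω ↦ (f (X ω), Y ω) := by
  rw [Measure.map_map (hf.prodMap measurable_id) (hX.prodMk hY)]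
  rfl

lemma map_prodMap_id_prod_map_prodAssoc {S T E F : Type*} [MeasurableSpace S] [MeasurableSpace T]
    [MeasurableSpace E] [MeasurableSpace F] {f : S → T} (hf : Measurable f)
    (ρ : Measure (S × E)) [SFinite ρ] (ν : Measure F) [SFinite ν] :
    ((ρ.prod ν).map MeasurableEquiv.prodAssoc).map (Prod.map f id)
      = ((ρ.map (Prod.map f id)).prod ν).map MeasurableEquiv.prodAssoc := by
  rw [← Measure.map_id (μ := ν), Measure.map_prod_map _ _ (hf.prodMap measurable_id) measurable_id,
    Measure.map_id, Measure.map_map (hf.prodMap measurable_id) (MeasurableEquiv.measurable _),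
    Measure.map_map (MeasurableEquiv.measurable _)
      ((hf.prodMap measurable_id).prodMap measurable_id)]
  rfl

section ConditionalMutualInformation

variable {Ω α β γ : Type*} [MeasurableSpace Ω] [MeasurableSpace α] [StandardBorelSpace α]
  [Nonempty α] [MeasurableSpace β] [StandardBorelSpace β] [Nonempty β] [MeasurableSpace γ]
  {μ : Measure Ω} [IsProbabilityMeasure μ] {A : Ω → α} {B : Ω → β} {C : Ω → γ}

lemma condDistrib_ae_eq_const_of_indepFun (hB : Measurable B) (hC : Measurable C)
    (hCB : IndepFun C B μ) : condDistrib B C μ =ᵐ[μ.map C] Kernel.const γ (μ.map B) := by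
  refine condDistrib_ae_eq_of_measure_eq_compProd_of_measurable hC hB ?_
  rw [Measure.compProd_const]
  exact (indepFun_iff_map_prod_eq_prod_map_map hC.aemeasurable hB.aemeasurable).1 hCB

theorem condMI_eq_klDiv_of_indepFun (hA : Measurable A) (hB : Measurable B) (hC : Measurable C)
    (hCB : IndepFun C B μ) :
    condMI μ A B C = klDiv (μ.map fun ω ↦ (C ω, A ω, B ω))
      (((μ.map fun ω ↦ (C ω, A ω)).prod (μ.map B)).map MeasurableEquiv.prodAssoc) := by
  have := Measure.isProbabilityMeasure_map (μ := μ) hB.aemeasurable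
  calc condMI μ A B C
      = ∫⁻ c, klDiv (condDistrib (fun ω ↦ (A ω, B ω)) C μ c)
          ((condDistrib A C μ ×ₖ Kernel.const γ (μ.map B)) c) ∂μ.map C := by
        refine lintegral_congr_ae ?_
        filter_upwards [condDistrib_ae_eq_const_of_indepFun hB hC hCB] with c hc
        rw [hc, Kernel.prod_apply, KLdiv_eq_klDiv]
    _ = _ := by
        rw [lintegral_klDiv_eq_klDiv_compProd, compProd_map_condDistrib (hA.prodMk hB).aemeasurable,
          compProd_prod_const, compProd_map_condDistrib hA.aemeasurable]

theorem condMI_comp_le_of_indepFun {S T : Type*} [MeasurableSpace S] [MeasurableSpace T]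
    {X : Ω → S} {f : S → T} (hA : Measurable A) (hB : Measurable B) (hX : Measurable X)
    (hf : Measurable f) (hXB : IndepFun X B μ) :
    condMI μ A B (f ∘ X) ≤ condMI μ A B X := by
  rw [condMI_eq_klDiv_of_indepFun hA hB (hf.comp hX) (hXB.comp hf measurable_id),
    condMI_eq_klDiv_of_indepFun hA hB hX hXB]
  simp only [Function.comp_apply]
  rw [← map_prodMap_id_map_prodMk hf hX (hA.prodMk hB), ← map_prodMap_id_map_prodMk hf hX hA,
    ← map_prodMap_id_prod_map_prodAssoc hf]
  exact klDiv_map_le _ _ (hf.prodMap measurable_id)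

end ConditionalMutualInformation

instance : IsProbabilityMeasure bern := by unfold bern; infer_instance

lemma indepFun_of_map_prodMk_eq_prod {Ω S T : Type*} [MeasurableSpace Ω] [MeasurableSpace S]
    [MeasurableSpace T] {μ : Measure Ω} [IsProbabilityMeasure μ] {X : Ω → S} {Y : Ω → T}
    (hX : Measurable X) (hY : Measurable Y) {P : Measure S} {Q : Measure T}
    [IsProbabilityMeasure P] [IsProbabilityMeasure Q]
    (h : μ.map (fun ω ↦ (X ω, Y ω)) = P.prod Q) : IndepFun X Y μ := by
  have hP : μ.map X = P := by rw [← Measure.fst_map_prodMk hY, h, Measure.fst_prod]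
  have hQ : μ.map Y = Q := by rw [← Measure.snd_map_prodMk hX, h, Measure.snd_prod]
  rw [indepFun_iff_map_prod_eq_prod_map_map hX.aemeasurable hY.aemeasurable, hP, hQ, h]

theorem stmt11_general
    {𝒵 𝒲 : Type*}
    [MeasurableSpace 𝒵]
    [MeasurableSpace 𝒲] [StandardBorelSpace 𝒲] [Nonempty 𝒲]
    {Ω : Type*} [MeasurableSpace Ω] (μ : Measure Ω) [IsProbabilityMeasure μ]
    (N : ℕ)
    (PZ : Measure 𝒵) [IsProbabilityMeasure PZ]
    (St : Ω → Fin (2 * N) → 𝒵) (U : Ω → Fin N → Bool) (W : Ω → 𝒲)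
    (hSt : Measurable St) (hU : Measurable U) (hW : Measurable W)
    -- `S̃` is i.i.d. `P_Z`, `U` is i.i.d. Bernoulli(1/2), and they are independent
    (hlaw : μ.map (fun ω => (St ω, U ω)) =
      (Measure.pi fun _ : Fin (2 * N) => PZ).prod (Measure.pi fun _ : Fin N => bern))
    (i : Fin N) :
    condMI μ W (fun ω => U ω i)
        (fun ω => (St ω (subIdx N i false), St ω (subIdx N i true))) ≤
      condMI μ W (fun ω => U ω i) St := by
  have hUi : Measurable fun ω ↦ U ω i := (measurable_pi_apply i).comp hU
  have hindep : IndepFun St (fun ω ↦ U ω i) μ :=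
    (indepFun_of_map_prodMk_eq_prod hSt hU hlaw).comp measurable_id (measurable_pi_apply i)
  exact condMI_comp_le_of_indepFun hW hUi hSt
    ((measurable_pi_apply _).prodMk (measurable_pi_apply _)) hindep

/-- in the randomized subsample setting,
`I(W; U_i | Z̃_i, Z̃_{i+N}) ≤ I(W; U_i | S̃)` for every `i`. -/
theorem stmt11
    {𝒵 𝒲 : Type*}
    [MeasurableSpace 𝒵] [StandardBorelSpace 𝒵] [Nonempty 𝒵]
    [MeasurableSpace 𝒲] [StandardBorelSpace 𝒲] [Nonempty 𝒲]
    {Ω : Type*} [MeasurableSpace Ω] (μ : Measure Ω) [IsProbabilityMeasure μ]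
    (N : ℕ) (hN : 0 < N)
    (PZ : Measure 𝒵) [IsProbabilityMeasure PZ]
    (St : Ω → Fin (2 * N) → 𝒵) (U : Ω → Fin N → Bool) (W : Ω → 𝒲)
    (hSt : Measurable St) (hU : Measurable U) (hW : Measurable W)
    -- `S̃` is i.i.d. `P_Z`, `U` is i.i.d. Bernoulli(1/2), and they are independent
    (hlaw : μ.map (fun ω => (St ω, U ω)) =
      (Measure.pi fun _ : Fin (2 * N) => PZ).prod (Measure.pi fun _ : Fin N => bern))
    -- the hypothesis `W` is produced by a Markov kernel applied to the dataset `S`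
    (hkernel : ∃ κ : Kernel (Fin N → 𝒵) 𝒲, IsMarkovKernel κ ∧
      μ.map (fun ω => ((St ω, U ω), W ω)) =
        (μ.map fun ω => (St ω, U ω)) ⊗ₘ κ.comap (dataset N) measurable_dataset)
    (i : Fin N) :
    condMI μ W (fun ω => U ω i)
        (fun ω => (St ω (subIdx N i false), St ω (subIdx N i true))) ≤
      condMI μ W (fun ω => U ω i) St :=
  stmt11_general μ N PZ St U W hSt hU hW hlaw i
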